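/- Let f:[a,b]→ℝ be convex. Then (b−a)/3 · [f((5a+b)/6) + f((a+b)/2) + f((a+5b)/6)] ≤ ∫_a^b f(t) dt ≤ (b−a)/6 · [f(a) + 2f((2a+b)/3) + 2f((a+2b)/3) + f(b)]. -/

import Mathlib

/-!
Split `[a, b]` into three equal pieces and apply the classical Hermite–Hadamard inequality on each.
The classical inequality comes from averaging `f t` with its reflection `f (a + b - t)`, which has
the same integral: by convexity this average lies between `f ((a + b) / 2)` and `(f a + f b) / 2`.
-/

open MeasureTheory Set intervalIntegral

section

variable {s : Set ℝ} {a b t : ℝ} {f : ℝ → ℝ}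

lemma ConvexOn.map_add_div_two_le (hf : ConvexOn ℝ s f) {x y : ℝ} (hx : x ∈ s) (hy : y ∈ s) :
    f ((x + y) / 2) ≤ (f x + f y) / 2 := by
  have h := hf.2 hx hy (by norm_num : (0 : ℝ) ≤ 1 / 2) (by norm_num : (0 : ℝ) ≤ 1 / 2)
    (by norm_num)
  simp only [smul_eq_mul] at h
  rw [show (x + y) / 2 = 1 / 2 * x + 1 / 2 * y by ring]
  linarith

lemma ConvexOn.add_map_reflect_le (hf : ConvexOn ℝ (Icc a b) f) (ht : t ∈ Icc a b) :
    f t + f (a + b - t) ≤ f a + f b := by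
  have ha : a ∈ Icc a b := left_mem_Icc.2 (ht.1.trans ht.2)
  have hb : b ∈ Icc a b := right_mem_Icc.2 (ht.1.trans ht.2)
  rcases (ht.1.trans ht.2).eq_or_lt with rfl | hab
  · obtain rfl : t = a := le_antisymm ht.2 ht.1
    simp
  -- `t` and `a + b - t` are the convex combinations of `a, b` with weights `(1 - μ, μ)` and
  -- `(μ, 1 - μ)`
  set μ := (t - a) / (b - a)
  have hμ : μ ∈ Icc (0 : ℝ) 1 := by
    constructor
    · exact div_nonneg (by linarith [ht.1]) (by linarith)
    · rw [div_le_one (by linarith)]; linarith [ht.2]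
  have h₁ := hf.2 ha hb (sub_nonneg.2 hμ.2) hμ.1 (sub_add_cancel 1 μ)
  have h₂ := hf.2 ha hb hμ.1 (sub_nonneg.2 hμ.2) (add_sub_cancel μ 1)
  have e₁ : (1 - μ) • a + μ • b = t := by simp only [μ, smul_eq_mul]; field_simp; ring
  have e₂ : μ • a + (1 - μ) • b = a + b - t := by simp only [μ, smul_eq_mul]; field_simp; ring
  rw [e₁] at h₁
  rw [e₂] at h₂
  simp only [smul_eq_mul] at h₁ h₂
  linarith

lemma ConvexOn.exists_abs_le (hf : ConvexOn ℝ (Icc a b) f) :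
    ∃ C, ∀ x ∈ Icc a b, |f x| ≤ C := by
  set M := max (f a) (f b)
  refine ⟨|M| + |2 * f ((a + b) / 2) - M|, fun x hx => ?_⟩
  have ha : a ∈ Icc a b := left_mem_Icc.2 (hx.1.trans hx.2)
  have hb : b ∈ Icc a b := right_mem_Icc.2 (hx.1.trans hx.2)
  refine abs_le.2 ⟨?_, ?_⟩
  -- reflecting through the midpoint turns the upper bound `M` into the lower bound
  -- `2 f ((a + b) / 2) - M`
  · have hx' : a + b - x ∈ Icc a b := ⟨by linarith [hx.2], by linarith [hx.1]⟩
    have hmid := hf.map_add_div_two_le hx hx'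
    rw [add_sub_cancel] at hmid
    have hup : f (a + b - x) ≤ M := hf.le_max_of_mem_Icc ha hb hx'
    linarith [neg_abs_le (2 * f ((a + b) / 2) - M), abs_nonneg M]
  · have hup : f x ≤ M := hf.le_max_of_mem_Icc ha hb hx
    linarith [le_abs_self M, abs_nonneg (2 * f ((a + b) / 2) - M)]

lemma ConvexOn.integrableOn_Icc (hf : ConvexOn ℝ (Icc a b) f) : IntegrableOn f (Icc a b) := by
  obtain ⟨C, hC⟩ := hf.exists_abs_le
  rw [integrableOn_Icc_iff_integrableOn_Ioo]
  have hcont : ContinuousOn f (Ioo a b) := by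
    simpa only [interior_Icc] using hf.continuousOn_interior
  refine .of_bound measure_Ioo_lt_top (hcont.aestronglyMeasurable measurableSet_Ioo) C ?_
  exact (ae_restrict_iff' measurableSet_Ioo).2 (.of_forall fun x hx => hC x (Ioo_subset_Icc_self hx))

lemma ConvexOn.intervalIntegrable (hab : a ≤ b) (hf : ConvexOn ℝ (Icc a b) f) :
    IntervalIntegrable f volume a b :=
  (uIcc_of_le hab ▸ hf.integrableOn_Icc).intervalIntegrable

lemma intervalIntegral.integral_comp_add_sub (f : ℝ → ℝ) :
    ∫ t in a..b, f (a + b - t) = ∫ t in a..b, f t := by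
  simp

lemma IntervalIntegrable.comp_add_sub (hf : IntervalIntegrable f volume a b) :
    IntervalIntegrable (fun t => f (a + b - t)) volume a b := by
  simpa using (hf.comp_sub_left (a + b)).symm

lemma IntervalIntegrable.symmetrize (hf : IntervalIntegrable f volume a b) :
    IntervalIntegrable (fun t => (f t + f (a + b - t)) / 2) volume a b :=
  (hf.add hf.comp_add_sub).div_const 2

lemma intervalIntegral.integral_eq_integral_symmetrize (hf : IntervalIntegrable f volume a b) :
    ∫ t in a..b, f t = ∫ t in a..b, (f t + f (a + b - t)) / 2 := by
  rw [intervalIntegral.integral_div, integral_add hf hf.comp_add_sub, integral_comp_add_sub]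
  ring

theorem ConvexOn.hermite_hadamard (hab : a ≤ b) (hf : ConvexOn ℝ (Icc a b) f) :
    (b - a) * f ((a + b) / 2) ≤ ∫ t in a..b, f t ∧
      ∫ t in a..b, f t ≤ (b - a) * ((f a + f b) / 2) := by
  have hi := hf.intervalIntegrable hab
  rw [integral_eq_integral_symmetrize hi]
  constructor
  · calc (b - a) * f ((a + b) / 2) = ∫ _ in a..b, f ((a + b) / 2) := by simp
      _ ≤ _ := integral_mono_on hab intervalIntegrable_const hi.symmetrize fun t ht => by
        have := hf.map_add_div_two_le (y := a + b - t) ht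
          ⟨by linarith [ht.2], by linarith [ht.1]⟩
        rwa [add_sub_cancel] at this
  · calc _ ≤ ∫ _ in a..b, (f a + f b) / 2 :=
          integral_mono_on hab hi.symmetrize intervalIntegrable_const
            fun t ht => by linarith [hf.add_map_reflect_le ht]
      _ = (b - a) * ((f a + f b) / 2) := by
          rw [intervalIntegral.integral_const, smul_eq_mul]

open Finset in
theorem ConvexOn.sum_hermite_hadamard {x : ℕ → ℝ} (hx : Monotone x) {n : ℕ}
    (hf : ConvexOn ℝ (Icc (x 0) (x n)) f) :
    ∑ k ∈ range n, (x (k + 1) - x k) * f ((x k + x (k + 1)) / 2) ≤ ∫ t in x 0..x n, f t ∧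
      ∫ t in x 0..x n, f t ≤
        ∑ k ∈ range n, (x (k + 1) - x k) * ((f (x k) + f (x (k + 1))) / 2) := by
  have hpiece : ∀ k < n, ConvexOn ℝ (Icc (x k) (x (k + 1))) f := fun k hk =>
    hf.subset (Icc_subset_Icc (hx k.zero_le) (hx hk)) (convex_Icc _ _)
  rw [← sum_integral_adjacent_intervals fun k hk =>
    (hpiece k hk).intervalIntegrable (hx k.le_succ)]
  exact ⟨sum_le_sum fun k hk => ((hpiece k (mem_range.1 hk)).hermite_hadamard (hx k.le_succ)).1,
    sum_le_sum fun k hk => ((hpiece k (mem_range.1 hk)).hermite_hadamard (hx k.le_succ)).2⟩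

open Finset in
theorem ConvexOn.hermite_hadamard_uniform (hab : a ≤ b) (hf : ConvexOn ℝ (Icc a b) f) {n : ℕ}
    (hn : n ≠ 0) :
    (b - a) / n * ∑ k ∈ range n, f (a + (2 * k + 1) * (b - a) / (2 * n)) ≤ ∫ t in a..b, f t ∧
      ∫ t in a..b, f t ≤
        (b - a) / (2 * n) *
          ∑ k ∈ range n, (f (a + k * (b - a) / n) + f (a + (k + 1) * (b - a) / n)) := by
  set x : ℕ → ℝ := fun k => a + k * (b - a) / n
  have hx : Monotone x := fun i j hij => by
    simp only [x]
    gcongr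
  have hx0 : x 0 = a := by simp [x]
  have hxn : x n = b := by simp only [x]; field_simp; ring
  have hf' : ConvexOn ℝ (Icc (x 0) (x n)) f := by rwa [hx0, hxn]
  obtain ⟨hlo, hhi⟩ := hf'.sum_hermite_hadamard hx
  rw [hx0, hxn] at hlo hhi
  have hstep : ∀ k : ℕ, x (k + 1) - x k = (b - a) / n := fun k => by
    simp only [x]; push_cast; ring
  have hmid : ∀ k : ℕ, (x k + x (k + 1)) / 2 = a + (2 * k + 1) * (b - a) / (2 * n) := fun k => by
    simp only [x]; push_cast; field_simp; ring
  simp only [hstep, hmid, ← mul_sum] at hlo hhi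
  refine ⟨hlo, hhi.trans_eq ?_⟩
  simp only [x]
  push_cast
  rw [← sum_div]
  ring

end

open Finset in
theorem hermite_hadamard_n3
    (a b : ℝ) (hab : a < b) (f : ℝ → ℝ)
    (hf : ConvexOn ℝ (Set.Icc a b) f) :
    (b - a) / 3 * (f ((5 * a + b) / 6) + f ((a + b) / 2) + f ((a + 5 * b) / 6)) ≤
      (∫ t in a..b, f t) ∧
    (∫ t in a..b, f t) ≤
      (b - a) / 6 * (f a + 2 * f ((2 * a + b) / 3) + 2 * f ((a + 2 * b) / 3) + f b) := by
  obtain ⟨hlo, hhi⟩ := hf.hermite_hadamard_uniform hab.le three_ne_zero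
  simp only [sum_range_succ, sum_range_zero, Nat.cast_ofNat, Nat.cast_zero, Nat.cast_one]
    at hlo hhi
  ring_nf at hlo hhi ⊢
  constructor <;> linarith
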